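/- arXiv:2404.05778 — 10 statements merged into one kernel-verified Lean document; each statement's English description precedes it below -/
import Mathlib

section
/- Every k₁-Hausdorff topological space is KC; that is, if the diagonal Δ_X is k₁-closed in X × X, then every compact subset of X is closed. -/
/-! If `x` lies in the closure of a compact set `K`, then `L = K ∪ {x}` is compact; testing the
k₁-closed diagonal on the compact set `L × L` shows that `L` is Hausdorff. Being compact in `L`, the set `K` is closed
in `L`, hence contains `x`. -/

open Set Filter Topology

universe u

/-- A subset `C` of a space `X` is k₁-closed provided for every compact subset `K` of `X`,
the intersection `C ∩ K` is closed in the subspace topology on `K`. -/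
def IsK1Closed {X : Type u} [TopologicalSpace X] (C : Set X) : Prop :=
  ∀ K : Set X, IsCompact K → IsClosed ((Subtype.val : K → X) ⁻¹' C)

/-- A space is k₁-Hausdorff provided its diagonal is k₁-closed in its square. -/
def K1Hausdorff (X : Type u) [TopologicalSpace X] : Prop :=
  IsK1Closed {p : X × X | p.1 = p.2}

/-- A space is KC provided every compact subset is closed. -/
def KCSpace (X : Type u) [TopologicalSpace X] : Prop :=
  ∀ K : Set X, IsCompact K → IsClosed K

/-- A space `X` is weakly Hausdorff provided for every compact Hausdorff space `K` and
continuous `f : K → X`, the image of `f` is closed in `X`. -/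
def WeaklyHausdorff (X : Type u) [TopologicalSpace X] : Prop :=
  ∀ (K : Type u) [TopologicalSpace K] [CompactSpace K] [T2Space K]
    (f : K → X), Continuous f → IsClosed (Set.range f)

/-- A subset `C` of `X` is k₂-closed provided for every compact Hausdorff space `K` and
continuous `f : K → X`, the preimage `f ⁻¹' C` is closed in `K`. -/
def IsK2Closed {X : Type u} [TopologicalSpace X] (C : Set X) : Prop :=
  ∀ (K : Type u) [TopologicalSpace K] [CompactSpace K] [T2Space K]
    (f : K → X), Continuous f → IsClosed (f ⁻¹' C)

/-- A space is k₂-Hausdorff provided its diagonal is k₂-closed in its square. -/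
def K2Hausdorff (X : Type u) [TopologicalSpace X] : Prop :=
  IsK2Closed {p : X × X | p.1 = p.2}

/-- A space has unique sequential limits provided every convergent sequence has a unique limit. -/
def UniqueSequentialLimits (X : Type u) [TopologicalSpace X] : Prop :=
  ∀ (a : ℕ → X) (l₀ l₁ : X),
    Filter.Tendsto a Filter.atTop (nhds l₀) →
    Filter.Tendsto a Filter.atTop (nhds l₁) → l₀ = l₁

section

variable {X Y : Type*} [TopologicalSpace X] [TopologicalSpace Y]

theorem IsK1Closed.isClosed_preimage {C K : Set X} (hC : IsK1Closed C) (hK : IsCompact K)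
    {f : Y → X} (hf : Continuous f) (hfK : ∀ y, f y ∈ K) : IsClosed (f ⁻¹' C) :=
  (hC K hK).preimage (hf.codRestrict hfK)

theorem K1Hausdorff.t2Space_of_isCompact (h : K1Hausdorff X) {L : Set X} (hL : IsCompact L) :
    T2Space L := by
  have hdiag : diagonal L = (fun p : L × L ↦ ((p.1 : X), (p.2 : X))) ⁻¹' {p | p.1 = p.2} := by
    ext p
    exact Subtype.ext_iff
  rw [t2_iff_isClosed_diagonal, hdiag]
  exact h.isClosed_preimage (hL.prod hL) (by fun_prop) fun p ↦ ⟨p.1.2, p.2.2⟩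

theorem IsCompact.isClosed_of_t2Space_insert {K : Set X} (hK : IsCompact K)
    (hT2 : ∀ x ∈ closure K, T2Space (insert x K : Set X)) : IsClosed K := by
  refine isClosed_of_closure_subset fun x hx ↦ ?_
  set L : Set X := insert x K
  have := hT2 x hx
  have hKL : K ⊆ range ((↑) : L → X) := by
    rw [Subtype.range_coe]
    exact subset_insert x K
  have hclosed : IsClosed ((↑) ⁻¹' K : Set L) :=
    (IsInducing.subtypeVal.isCompact_preimage' hK hKL).isClosed
  have hx' : (⟨x, mem_insert x K⟩ : L) ∈ closure ((↑) ⁻¹' K) := by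
    rwa [closure_subtype, image_preimage_eq_of_subset hKL]
  exact hclosed.closure_subset hx'

end

/-- Every k₁-Hausdorff space is KC: every compact subset is closed. -/
theorem k1Hausdorff_implies_kc (X : Type u) [TopologicalSpace X] (h : K1Hausdorff X) :
    ∀ K : Set X, IsCompact K → IsClosed K :=
  fun _ hK ↦ hK.isClosed_of_t2Space_insert fun x _ ↦ h.t2Space_of_isCompact (hK.insert x)
end

section
/- A topological space X is k₁-Hausdorff if and only if every compact subspace of X is both closed in X and Hausdorff in the subspace topology. -/
/-!
A compact set `K` of a k₁-Hausdorff space meets every compact `L` in a relatively closed set: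
inside `K × L` the pairs of equal points form a closed set, and projecting it along the compact
factor `K` gives `K ∩ L`. Taking `L = insert x K` for `x ∈ closure K` shows that `K` is closed.
Hausdorffness of compact subspaces is the same statement as k₁-closedness of the diagonal on
squares `K ×ˢ K`, and any compact subset of `X × X` lies in such a square.
-/

open Set Filter Topology

universe u

section

variable {X : Type u} [TopologicalSpace X]

theorem isClosed_preimage_val_diagonal_prod_iff {K L : Set X} :
    IsClosed (((↑) : ↥(K ×ˢ L) → X × X) ⁻¹' {p | p.1 = p.2}) ↔
      IsClosed {p : K × L | (p.1 : X) = p.2} :=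
  (Homeomorph.Set.prod K L).isClosed_preimage (s := {p : K × L | (p.1 : X) = p.2})

theorem isClosed_preimage_val_diagonal_prod_self_iff {K : Set X} :
    IsClosed (((↑) : ↥(K ×ˢ K) → X × X) ⁻¹' {p | p.1 = p.2}) ↔ T2Space K := by
  rw [isClosed_preimage_val_diagonal_prod_iff, t2_iff_isClosed_diagonal]
  simp only [Set.diagonal, Subtype.ext_iff]

theorem K1Hausdorff.isClosed_preimage_val_of_isCompact (hX : K1Hausdorff X) {K L : Set X}
    (hK : IsCompact K) (hL : IsCompact L) : IsClosed (((↑) : L → X) ⁻¹' K) := by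
  have hdiag : IsClosed {p : K × L | (p.1 : X) = p.2} :=
    isClosed_preimage_val_diagonal_prod_iff.mp (hX _ (hK.prod hL))
  have : CompactSpace K := isCompact_iff_compactSpace.mp hK
  convert isClosedMap_snd_of_compactSpace _ hdiag using 1
  ext y
  refine ⟨fun hy => ⟨(⟨y, hy⟩, y), rfl, rfl⟩, ?_⟩
  rintro ⟨⟨x, _⟩, hxy : (x : X) = _, rfl⟩
  exact mem_preimage.mpr (hxy ▸ x.2)

theorem K1Hausdorff.isClosed_of_isCompact (hX : K1Hausdorff X) {K : Set X} (hK : IsCompact K) :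
    IsClosed K := by
  refine isClosed_of_closure_subset fun x hx => ?_
  have hclosed := hX.isClosed_preimage_val_of_isCompact hK (hK.insert x)
  have hx' : (⟨x, mem_insert x K⟩ : ↥(insert x K)) ∈ closure ((↑) ⁻¹' K) := by
    rwa [closure_subtype, Subtype.image_preimage_coe, inter_eq_right.mpr (subset_insert x K)]
  exact hclosed.closure_subset hx'

theorem K1Hausdorff.t2Space_of_isCompact_s2 (hX : K1Hausdorff X) {K : Set X} (hK : IsCompact K) :
    T2Space K :=
  isClosed_preimage_val_diagonal_prod_self_iff.mp (hX _ (hK.prod hK))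

theorem K1Hausdorff.of_t2Space_of_isCompact (h : ∀ K : Set X, IsCompact K → T2Space K) :
    K1Hausdorff X := by
  intro L hL
  set K := Prod.fst '' L ∪ Prod.snd '' L
  have hLK : L ⊆ K ×ˢ K := fun p hp => ⟨.inl ⟨p, hp, rfl⟩, .inr ⟨p, hp, rfl⟩⟩
  have hK : IsCompact K := (hL.image continuous_fst).union (hL.image continuous_snd)
  have hdiag := isClosed_preimage_val_diagonal_prod_self_iff.mpr (h K hK)
  exact hdiag.preimage (continuous_inclusion hLK)

end

/-- A space is k₁-Hausdorff iff every compact subspace is closed and Hausdorff. -/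
theorem k1Hausdorff_iff_compact_closed_and_hausdorff (X : Type u) [TopologicalSpace X] :
    K1Hausdorff X ↔ ∀ K : Set X, IsCompact K → IsClosed K ∧ T2Space K :=
  ⟨fun hX _ hK => ⟨hX.isClosed_of_isCompact hK, hX.t2Space_of_isCompact_s2 hK⟩,
    fun h => .of_t2Space_of_isCompact fun K hK => (h K hK).2⟩
end

section
/- Every weakly Hausdorff topological space is k₂-Hausdorff; that is, if for every compact Hausdorff space K and continuous map f : K → X the image f[K] is closed in X, then the diagonal Δ_X = {(x,x) : x ∈ X} is k₂-closed in the product space X × X. -/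
open Set Filter Topology

universe u

/-!
A weakly Hausdorff space need not be Hausdorff, but the image of a compact Hausdorff space `K`
in it is: the image is `T1`, and `K` maps onto it by a closed map, so disjoint closed
neighbourhoods of two fibres in the normal space `K` push forward to disjoint neighbourhoods
of the two image points. Given `f : K → X × X`, both coordinates of `f` land in the image of
`K ⊕ K`, which is Hausdorff, so the set where they agree is closed.
-/

theorem IsClosedMap.t2Space_of_surjective {K Y : Type*} [TopologicalSpace K] [TopologicalSpace Y]
    [NormalSpace K] [T1Space Y] {f : K → Y} (hf : IsClosedMap f) (hf' : Continuous f)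
    (hsurj : Function.Surjective f) : T2Space Y :=
  t2Space_iff_disjoint_nhds.2 fun y y' hne => by
    change Disjoint (𝓝 y) (𝓝 y')
    rw [← disjoint_comap_iff hsurj, hf.comap_nhds_eq hf', hf.comap_nhds_eq hf']
    exact disjoint_nhdsSet_nhdsSet (isClosed_singleton.preimage hf')
      (isClosed_singleton.preimage hf') ((disjoint_singleton.2 hne).preimage f)

namespace WeaklyHausdorff

variable {X : Type u} [TopologicalSpace X]

theorem t1Space (h : WeaklyHausdorff X) : T1Space X :=
  ⟨fun x => by simpa only [range_const] using h PUnit (fun _ => x) continuous_const⟩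

theorem isClosedMap {K : Type u} [TopologicalSpace K] [CompactSpace K] [T2Space K]
    (h : WeaklyHausdorff X) {g : K → X} (hg : Continuous g) : IsClosedMap g := fun C hC => by
  have : CompactSpace C := isCompact_iff_compactSpace.mp hC.isCompact
  simpa only [range_comp, Subtype.range_coe] using h C (g ∘ (↑)) (hg.comp continuous_subtype_val)

theorem t2Space_range {K : Type u} [TopologicalSpace K] [CompactSpace K] [T2Space K]
    (h : WeaklyHausdorff X) {g : K → X} (hg : Continuous g) : T2Space (range g) :=
  have := h.t1Space
  (h.isClosedMap hg).codRestrict mem_range_self |>.t2Space_of_surjective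
    hg.rangeFactorization rangeFactorization_surjective

theorem isClosed_eq {K : Type u} [TopologicalSpace K] [CompactSpace K] [T2Space K]
    (h : WeaklyHausdorff X) {p q : K → X} (hp : Continuous p) (hq : Continuous q) :
    IsClosed {k | p k = q k} := by
  have hg := (hp.sumElim hq).rangeFactorization
  have := h.t2Space_range (hp.sumElim hq)
  simpa only [Subtype.ext_iff, Function.comp_apply, rangeFactorization_coe, Sum.elim_inl,
    Sum.elim_inr] using _root_.isClosed_eq (hg.comp continuous_inl) (hg.comp continuous_inr)

end WeaklyHausdorff

/-- Every weakly Hausdorff space is k₂-Hausdorff. -/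
theorem weaklyHausdorff_implies_k2Hausdorff (X : Type u) [TopologicalSpace X]
    (h : WeaklyHausdorff X) : K2Hausdorff X :=
  fun _ _ _ _ _ hf => h.isClosed_eq (continuous_fst.comp hf) (continuous_snd.comp hf)
end

section
/- Every weakly Hausdorff topological space has unique sequential limits; that is, if for every compact Hausdorff space K and continuous map f : K → X the image f[K] is closed in X, and a sequence (aₙ) in X converges to both l₀ and l₁, then l₀ = l₁. -/
open Set Filter Topology

universe u

/-! Singletons are images of a point, hence closed, so a sequence converging to `l₀ ≠ l₁`
eventually avoids `l₁`. But a tail of the sequence together with `l₀` is the image of the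
one-point compactification of `ℕ`, hence closed, so it contains the other limit `l₁`. -/

variable {X : Type u} [TopologicalSpace X]

theorem WeaklyHausdorff.t1Space_s7 (h : WeaklyHausdorff X) : T1Space X where
  t1 x := by simpa using h PUnit (fun _ => x) continuous_const

theorem WeaklyHausdorff.isClosed_insert_range_of_tendsto_cofinite (h : WeaklyHausdorff X)
    {ι : Type u} [TopologicalSpace ι] [DiscreteTopology ι] {a : ι → X} {l : X}
    (ha : Tendsto a cofinite (𝓝 l)) : IsClosed (insert l (range a)) := by
  let f := OnePoint.continuousMapMkDiscrete a l ha
  have hf : range f = insert l (range a) := Option.range_elim l a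
  exact hf ▸ h (OnePoint ι) f f.continuous

theorem WeaklyHausdorff.isClosed_insert_range_of_tendsto_atTop (h : WeaklyHausdorff X)
    {a : ℕ → X} {l : X} (ha : Tendsto a atTop (𝓝 l)) : IsClosed (insert l (range a)) := by
  have ha' : Tendsto (a ∘ ULift.down.{u}) cofinite (𝓝 l) :=
    (Nat.cofinite_eq_atTop ▸ ha).comp Equiv.ulift.injective.tendsto_cofinite
  simpa [ULift.down_surjective.range_comp] using h.isClosed_insert_range_of_tendsto_cofinite ha'

/-- Every weakly Hausdorff space has unique sequential limits. -/
theorem weaklyHausdorff_implies_uniqueSequentialLimits (X : Type u) [TopologicalSpace X]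
    (h : WeaklyHausdorff X) : UniqueSequentialLimits X := by
  intro a l₀ l₁ h₀ h₁
  by_contra hne
  have := h.t1Space_s7
  obtain ⟨m, hm⟩ : ∃ m, ∀ n ≥ m, a n ≠ l₁ := eventually_atTop.1 (h₀.eventually_ne hne)
  have hclosed := h.isClosed_insert_range_of_tendsto_atTop (h₀.comp (tendsto_add_atTop_nat m))
  have hmem : l₁ ∈ insert l₀ (range fun n ↦ a (n + m)) :=
    hclosed.mem_of_tendsto (h₁.comp (tendsto_add_atTop_nat m))
      (Eventually.of_forall fun n ↦ mem_insert_of_mem _ (mem_range_self n))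
  rcases hmem with hl | ⟨n, hn⟩
  · exact hne hl.symm
  · exact hm (n + m) (Nat.le_add_left m n) hn
end

section
/- The one-point compactification of any Hausdorff topological space is k₂-Hausdorff; that is, if X is a T₂ space and X⁺ = X ∪ {∞} is its one-point compactification, then the diagonal of X⁺ is k₂-closed in X⁺ × X⁺. -/
open Set Filter Topology

universe u

/-!
`X⁺` need not be Hausdorff, so the point is to separate `g k = ∞` from `h k ∈ X` for continuous
`g, h : K → X⁺` on a compact Hausdorff `K`. Take a compact neighbourhood `B` of `k` that `h` maps
into `X`. Then `h '' B` is a compact subset of the Hausdorff space `X`, hence closed, so its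
complement is a neighbourhood of `∞`, and near `k` the value `g s` avoids `h '' B ∋ h s`.
-/

namespace OnePoint

variable {X : Type*} [TopologicalSpace X] [T2Space X]

theorem isClosed_of_isCompact_of_infty_notMem {C : Set (OnePoint X)} (hC : IsCompact C)
    (hC_infty : ∞ ∉ C) : IsClosed C := by
  have hC_sub : C ⊆ range ((↑) : X → OnePoint X) := fun p hp =>
    ne_infty_iff_exists.1 (ne_of_mem_of_not_mem hp hC_infty)
  have hQ : IsCompact (((↑) : X → OnePoint X) ⁻¹' C) :=
    (isOpenEmbedding_coe.isInducing.isCompact_preimage_iff hC_sub).2 hC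
  rw [← image_preimage_eq_of_subset hC_sub, ← isOpen_compl_iff]
  exact isOpen_compl_image_coe.2 ⟨hQ.isClosed, hQ⟩

theorem setOf_fst_ne_snd_mem_nhds_coe {a b : X} (hab : a ≠ b) :
    {p : OnePoint X × OnePoint X | p.1 ≠ p.2} ∈ 𝓝 ((a : OnePoint X), (b : OnePoint X)) := by
  change _ ∈ 𝓝 (Prod.map ((↑) : X → OnePoint X) ((↑) : X → OnePoint X) (a, b))
  rw [← (isOpenEmbedding_coe.prodMap isOpenEmbedding_coe).map_nhds_eq (a, b), mem_map]
  filter_upwards [isClosed_diagonal.isOpen_compl.mem_nhds hab] with p hp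
  exact fun h => hp (coe_injective h)

variable {K : Type*} [TopologicalSpace K] [LocallyCompactSpace K]

theorem eventually_ne_of_eq_infty {g h : K → OnePoint X} (hg : Continuous g) (hh : Continuous h)
    {k : K} (hgk : g k = ∞) (hhk : h k ≠ ∞) : ∀ᶠ s in 𝓝 k, g s ≠ h s := by
  obtain ⟨B, hB, hB_sub, hB_compact⟩ :=
    local_compact_nhds (hh.continuousAt.preimage_mem_nhds (isClosed_infty.isOpen_compl.mem_nhds hhk))
  have hB_closed : IsClosed (h '' B) :=
    isClosed_of_isCompact_of_infty_notMem (hB_compact.image hh)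
      fun ⟨s, hs, hs_infty⟩ => hB_sub hs hs_infty
  have hg_avoids : ∀ᶠ s in 𝓝 k, g s ∉ h '' B :=
    hg.continuousAt.preimage_mem_nhds
      (hB_closed.isOpen_compl.mem_nhds fun ⟨s, hs, hs_infty⟩ => hB_sub hs (hs_infty.trans hgk))
  filter_upwards [hg_avoids, hB] with s hs_avoid hs_B hs_eq
  exact hs_avoid (hs_eq ▸ mem_image_of_mem h hs_B)

theorem eventually_fst_ne_snd {f : K → OnePoint X × OnePoint X} (hf : Continuous f) {k : K}
    (hk : (f k).1 ≠ (f k).2) : ∀ᶠ s in 𝓝 k, (f s).1 ≠ (f s).2 := by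
  have hf₁ : Continuous fun s => (f s).1 := continuous_fst.comp hf
  have hf₂ : Continuous fun s => (f s).2 := continuous_snd.comp hf
  rcases h₁ : (f k).1 with _ | a <;> rcases h₂ : (f k).2 with _ | b <;> rw [h₁, h₂] at hk
  · exact absurd rfl hk
  · exact eventually_ne_of_eq_infty hf₁ hf₂ h₁ (h₂ ▸ coe_ne_infty b)
  · exact (eventually_ne_of_eq_infty hf₂ hf₁ h₂ (h₁ ▸ coe_ne_infty a)).mono fun _ => Ne.symm
  · have hfk : f k = ((a : OnePoint X), (b : OnePoint X)) := Prod.ext h₁ h₂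
    exact hf.continuousAt.preimage_mem_nhds
      (hfk ▸ setOf_fst_ne_snd_mem_nhds_coe fun hab => hk (congrArg _ hab))

end OnePoint

/-- The one-point compactification of any Hausdorff space is k₂-Hausdorff. -/
theorem onePoint_of_hausdorff_is_k2Hausdorff (X : Type u) [TopologicalSpace X] [T2Space X] :
    K2Hausdorff (OnePoint X) := by
  intro K _ _ _ f hf
  rw [← isOpen_compl_iff, isOpen_iff_mem_nhds]
  exact fun k hk => OnePoint.eventually_fst_ne_snd hf hk
end

section
/- There exists a topological space that is k₁-Hausdorff but not Hausdorff (T₂). -/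
/-!
Take an uncountable set with the cocountable topology. Every countable set is closed, so a
countably infinite subset of a compact set would be compact and discrete; hence compact sets are
finite, and so are compact subsets of the square. In a T₁ space every subset of a finite set is
closed in it, so every set, in particular the diagonal, is k₁-closed. On the other hand two
nonempty open sets have countable complements and therefore meet, so the space is not Hausdorff.
-/

open Set Filter Topology

universe u

section FiniteCompacts

variable {X Y : Type*} [TopologicalSpace X] [TopologicalSpace Y]

theorem IsCompact.finite_of_forall_countable_isClosed {K : Set X} (hK : IsCompact K)
    (h : ∀ s : Set X, s.Countable → IsClosed s) : K.Finite := by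
  by_contra hK_inf
  obtain ⟨S, hSK, hS_count, hS_inf⟩ := Set.Infinite.exists_subset_countable_infinite hK_inf
  have hS_discrete : IsDiscrete S := isDiscrete_iff_forall_mem_exists_isClosed.mpr
    fun t htS => ⟨t, h t (hS_count.mono htS), inter_eq_left.mpr htS⟩
  exact hS_inf ((hK.of_isClosed_subset (h S hS_count) hSK).finite hS_discrete)

theorem IsCompact.finite_of_prod (hX : ∀ K : Set X, IsCompact K → K.Finite)
    (hY : ∀ K : Set Y, IsCompact K → K.Finite) {K : Set (X × Y)} (hK : IsCompact K) :
    K.Finite :=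
  ((hX _ (hK.image continuous_fst)).prod (hY _ (hK.image continuous_snd))).subset
    subset_fst_image_prod_snd_image

theorem isK1Closed_of_forall_isCompact_finite [T1Space X]
    (h : ∀ K : Set X, IsCompact K → K.Finite) (C : Set X) : IsK1Closed C := fun K hK =>
  haveI := (h K hK).to_subtype
  (Set.toFinite _).isClosed

theorem k1Hausdorff_of_forall_isCompact_finite [T1Space X]
    (h : ∀ K : Set X, IsCompact K → K.Finite) : K1Hausdorff X :=
  isK1Closed_of_forall_isCompact_finite (fun _ => IsCompact.finite_of_prod h h) _

end FiniteCompacts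

def CocountableTopology (α : Type*) : Type _ := α

namespace CocountableTopology

variable {α : Type*}

instance : TopologicalSpace (CocountableTopology α) where
  IsOpen s := s.Nonempty → sᶜ.Countable
  isOpen_univ _ := by simp
  isOpen_inter s t hs ht := fun ⟨x, hxs, hxt⟩ => by
    rw [compl_inter]
    exact (hs ⟨x, hxs⟩).union (ht ⟨x, hxt⟩)
  isOpen_sUnion S hS := fun ⟨x, hx⟩ => by
    obtain ⟨s, hsS, hxs⟩ := mem_sUnion.mp hx
    exact (hS s hsS ⟨x, hxs⟩).mono (compl_subset_compl.mpr (subset_sUnion_of_mem hsS))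

theorem isClosed_of_countable {s : Set (CocountableTopology α)} (hs : s.Countable) :
    IsClosed s :=
  ⟨fun _ => by rwa [compl_compl]⟩

instance : T1Space (CocountableTopology α) :=
  ⟨fun _ => isClosed_of_countable (countable_singleton _)⟩

theorem finite_of_isCompact {K : Set (CocountableTopology α)} (hK : IsCompact K) : K.Finite :=
  hK.finite_of_forall_countable_isClosed fun _ => isClosed_of_countable

instance [Uncountable α] : PreirreducibleSpace (CocountableTopology α) where
  isPreirreducible_univ u v hu hv := fun ⟨x, _, hxu⟩ ⟨y, _, hyv⟩ => by
    by_contra huv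
    rw [univ_inter, not_nonempty_iff_eq_empty] at huv
    have : (univ : Set (CocountableTopology α)).Countable := by
      simpa only [← compl_inter, huv, compl_empty] using (hu ⟨x, hxu⟩).union (hv ⟨y, hyv⟩)
    exact not_countable (α := α) (countable_univ_iff.mp this)

theorem not_t2Space [Uncountable α] : ¬ T2Space (CocountableTopology α) := fun _ =>
  haveI : Nontrivial (CocountableTopology α) := inferInstanceAs (Nontrivial α)
  not_preirreducible_nontrivial_t2 (CocountableTopology α)

end CocountableTopology

/-- There is a space that is k₁-Hausdorff but not Hausdorff. -/
theorem exists_k1Hausdorff_not_hausdorff :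
    ∃ (X : Type) (_ : TopologicalSpace X), K1Hausdorff X ∧ ¬ T2Space X :=
  ⟨CocountableTopology ℝ, inferInstance,
    k1Hausdorff_of_forall_isCompact_finite fun _ => CocountableTopology.finite_of_isCompact,
    CocountableTopology.not_t2Space⟩
end

section
/- There exists a topological space that is KC (every compact subset is closed) but not k₁-Hausdorff. -/
open Set Filter Topology

universe u

/-!
Take the one-point compactification `ℚ∞` of the rationals. Since `ℚ` is Hausdorff and sequential
(hence compactly coherent), `ℚ∞` is KC: a compact `K ⊆ ℚ∞` meets every compact `L ⊆ ℚ` in a compact,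
hence closed, set, so `K ∩ ℚ` is closed in `ℚ`. But `ℚ∞` is compact, so k₁-closedness of its
diagonal is plain closedness; that would make `ℚ∞` Hausdorff and hence `ℚ` locally compact,
which it is not.
-/

theorem IsK1Closed.isClosed {X : Type u} [TopologicalSpace X] [CompactSpace X] {C : Set X}
    (hC : IsK1Closed C) : IsClosed C :=
  (hC univ isCompact_univ).preimage (Homeomorph.Set.univ X).symm.continuous

theorem K1Hausdorff.t2Space {X : Type u} [TopologicalSpace X] [CompactSpace X]
    (h : K1Hausdorff X) : T2Space X :=
  t2_iff_isClosed_diagonal.2 (IsK1Closed.isClosed h)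

namespace OnePoint

variable {X : Type u} [TopologicalSpace X]

theorem isCompact_preimage_coe {K : Set (OnePoint X)} (hK : IsCompact K) (h : ∞ ∉ K) :
    IsCompact ((↑) ⁻¹' K : Set X) := by
  refine (isOpenEmbedding_coe.isInducing.isCompact_preimage_iff ?_).2 hK
  rintro (_ | x) hx
  exacts [absurd hx h, ⟨x, rfl⟩]

theorem kcSpace [CompactlyCoherentSpace X] (hX : KCSpace X) : KCSpace (OnePoint X) := by
  intro K hK
  have hclosed : IsClosed ((↑) ⁻¹' K : Set X) := by
    refine (CompactlyCoherentSpace.isClosed_iff _).2 fun L hL ↦ ?_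
    have hKL : IsCompact (K ∩ (↑) '' L) :=
      hK.inter_right (isClosed_image_coe.2 ⟨hX L hL, hL⟩)
    have hpre : IsCompact ((↑) ⁻¹' (K ∩ (↑) '' L) : Set X) :=
      isCompact_preimage_coe hKL fun h ↦ infty_notMem_image_coe h.2
    rw [preimage_inter, preimage_image_eq _ coe_injective, inter_comm] at hpre
    exact Subtype.preimage_coe_self_inter L _ ▸ (hX _ hpre).preimage_val
  by_cases hinf : ∞ ∈ K
  · exact (isClosed_iff_of_mem hinf).2 hclosed
  · exact (isClosed_iff_of_notMem hinf).2 ⟨hclosed, isCompact_preimage_coe hK hinf⟩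

theorem locallyCompactSpace_of_t2Space [T2Space (OnePoint X)] : LocallyCompactSpace X :=
  isOpenEmbedding_coe.locallyCompactSpace

end OnePoint

theorem Rat.not_weaklyLocallyCompactSpace : ¬ WeaklyLocallyCompactSpace ℚ := fun _ ↦ by
  obtain ⟨K, hK, hK0⟩ := exists_compact_mem_nhds (0 : ℚ)
  simpa [Rat.interior_compact_eq_empty hK] using mem_interior_iff_mem_nhds.2 hK0

/-- There is a KC space that is not k₁-Hausdorff. -/
theorem exists_kc_not_k1Hausdorff :
    ∃ (X : Type) (_ : TopologicalSpace X), KCSpace X ∧ ¬ K1Hausdorff X := by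
  refine ⟨OnePoint ℚ, inferInstance, OnePoint.kcSpace fun K hK ↦ hK.isClosed, fun h ↦ ?_⟩
  have := h.t2Space
  have := OnePoint.locallyCompactSpace_of_t2Space (X := ℚ)
  exact Rat.not_weaklyLocallyCompactSpace inferInstance
end

section
/- There exists a topological space that is weakly Hausdorff but not KC; that is, a space X in which the continuous image of every compact Hausdorff space is closed, yet some compact subset of X is not closed. -/
/-!
Take `Y = OnePoint ℚ`. Since `ℚ` is sequential and Hausdorff, `Y` is KC, hence weakly Hausdorff;
but `Y` is not a continuous image of a compact Hausdorff space: such a map would be a closed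
surjection, making `Y` normal, and a normal KC space is Hausdorff, which would make `ℚ` locally
compact.

The space `X` consists of countably many clopen copies `pt n '' Y` of `Y` (columns), a point `p`
to which the columns converge, and a point `q` whose neighbourhoods contain, in almost every
column, the complement of an image of a compact Hausdorff space. Then `{q}ᶜ` is compact (it is
the one-point compactification of the columns at `p`), and it is not closed because no such image
fills a column. A compact Hausdorff image `R` in `X` meets each column in a compact Hausdorff
image, which is closed in `Y`; the neighbourhood of `q` avoiding `R` off `q` shows by compactness
that `R` meets only finitely many columns unless `p ∈ R`, so `R` is closed.
-/

open Set Filter Topology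

universe u

theorem NormalSpace.of_continuous_surjective_isClosedMap {X Y : Type*} [TopologicalSpace X]
    [TopologicalSpace Y] [NormalSpace X] {f : X → Y} (hf : Continuous f)
    (hsurj : Function.Surjective f) (hcl : IsClosedMap f) : NormalSpace Y where
  normal s t hs ht hst := separatedNhds_iff_disjoint.2 <| (disjoint_comap_iff hsurj).1 <| by
    rw [hcl.comap_nhdsSet_eq hf, hcl.comap_nhdsSet_eq hf]
    exact disjoint_nhdsSet_nhdsSet (hs.preimage hf) (ht.preimage hf) (hst.preimage f)

theorem KCSpace.t2Space_of_continuous_surjective {Z X : Type*} [TopologicalSpace Z]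
    [CompactSpace Z] [T2Space Z] [TopologicalSpace X] (hX : KCSpace X) {f : Z → X}
    (hf : Continuous f) (hsurj : Function.Surjective f) : T2Space X :=
  have : NormalSpace X := .of_continuous_surjective_isClosedMap hf hsurj
    fun _ hC ↦ hX _ (hC.isCompact.image hf)
  have : T1Space X := ⟨fun _ ↦ hX _ isCompact_singleton⟩
  inferInstance

theorem KCSpace.weaklyHausdorff {X : Type u} [TopologicalSpace X] (hX : KCSpace X) :
    WeaklyHausdorff X :=
  fun _ _ _ _ _ hf ↦ hX _ (isCompact_range hf)

open OnePoint in
theorem OnePoint.kcSpace_s12 {X : Type u} [TopologicalSpace X] [SequentialSpace X] [T2Space X] :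
    KCSpace (OnePoint X) := by
  intro K hK
  have hcompact {s : Set X} (hs : IsCompact (K ∩ (↑) '' s)) : IsCompact ((↑) ⁻¹' K ∩ s) := by
    rwa [isOpenEmbedding_coe.isEmbedding.isCompact_iff, image_preimage_inter]
  by_cases hinf : ∞ ∈ K
  · rw [isClosed_iff_of_mem hinf]
    refine IsSeqClosed.isClosed fun u x hu hux ↦ ?_
    have hC := hux.isCompact_insert_range
    have hKC := hcompact (hK.inter_right (isClosed_image_coe.2 ⟨hC.isClosed, hC⟩))
    exact (hKC.isClosed.mem_of_tendsto hux (.of_forall fun n ↦ ⟨hu n, .inr ⟨n, rfl⟩⟩)).1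
  · have hKX : IsCompact ((↑) ⁻¹' K : Set X) := by
      simpa using hcompact (s := univ) <| by
        rwa [image_univ, ← compl_infty, inter_eq_left.2 (subset_compl_singleton_iff.2 hinf)]
    exact (isClosed_iff_of_notMem hinf).2 ⟨hKX.isClosed, hKX⟩

theorem OnePoint.not_t2Space_rat : ¬ T2Space (OnePoint ℚ) := by
  intro
  have : LocallyCompactSpace ℚ := OnePoint.isOpenEmbedding_coe.locallyCompactSpace
  obtain ⟨s, hs, hmem⟩ := exists_compact_mem_nhds (0 : ℚ)
  simpa [Rat.interior_compact_eq_empty hs] using mem_interior_iff_mem_nhds.2 hmem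

def IsCompactT2Image {Y : Type u} [TopologicalSpace Y] (J : Set Y) : Prop :=
  ∃ (Z : Type u) (_ : TopologicalSpace Z) (_ : CompactSpace Z) (_ : T2Space Z) (f : Z → Y),
    Continuous f ∧ range f = J

theorem Continuous.isCompactT2Image_range {Y Z : Type u} [TopologicalSpace Y] [TopologicalSpace Z]
    [CompactSpace Z] [T2Space Z] {f : Z → Y} (hf : Continuous f) : IsCompactT2Image (range f) :=
  ⟨Z, inferInstance, inferInstance, inferInstance, f, hf, rfl⟩

namespace IsCompactT2Image

variable {Y : Type u} [TopologicalSpace Y]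

theorem empty : IsCompactT2Image (∅ : Set Y) :=
  ⟨PEmpty, inferInstance, inferInstance, inferInstance, PEmpty.elim, continuous_of_discreteTopology,
    range_eq_empty _⟩

theorem union {J J' : Set Y} (h : IsCompactT2Image J) (h' : IsCompactT2Image J') :
    IsCompactT2Image (J ∪ J') := by
  obtain ⟨Z, _, _, _, f, hf, rfl⟩ := h
  obtain ⟨Z', _, _, _, g, hg, rfl⟩ := h'
  exact ⟨Z ⊕ Z', inferInstance, inferInstance, inferInstance, Sum.elim f g, hf.sumElim hg,
    Sum.elim_range f g⟩

theorem isClosed (hY : WeaklyHausdorff Y) {J : Set Y} (h : IsCompactT2Image J) : IsClosed J := by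
  obtain ⟨Z, _, _, _, f, hf, rfl⟩ := h
  exact hY Z f hf

theorem preimage {X : Type u} [TopologicalSpace X] {e : Y → X} (he : IsClosedEmbedding e)
    {J : Set X} (h : IsCompactT2Image J) : IsCompactT2Image (e ⁻¹' J) := by
  obtain ⟨Z, _, _, _, f, hf, rfl⟩ := h
  have : CompactSpace (f ⁻¹' range e) :=
    isCompact_iff_compactSpace.1 (he.isClosed_range.preimage hf).isCompact
  choose g hg using fun z : f ⁻¹' range e ↦ z.2
  refine ⟨f ⁻¹' range e, inferInstance, inferInstance, inferInstance, g, ?_, ?_⟩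
  · rw [he.continuous_iff]
    exact (funext hg : e ∘ g = _) ▸ hf.comp continuous_subtype_val
  · ext y
    refine ⟨fun ⟨z, hz⟩ ↦ ⟨z, hz ▸ (hg z).symm⟩, fun ⟨z, hz⟩ ↦ ⟨⟨z, y, hz.symm⟩, he.injective ?_⟩⟩
    rw [hg, hz]

theorem not_univ_of_kcSpace (hY : KCSpace Y) (hnt2 : ¬ T2Space Y) :
    ¬ IsCompactT2Image (univ : Set Y) := fun ⟨_, _, _, _, _, hf, hsurj⟩ ↦
  hnt2 (hY.t2Space_of_continuous_surjective hf (range_eq_univ.1 hsurj))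

end IsCompactT2Image

inductive ColumnSpace (Y : Type u) : Type u
  | pt : ℕ → Y → ColumnSpace Y
  | p : ColumnSpace Y
  | q : ColumnSpace Y

namespace ColumnSpace

variable {Y : Type u}

theorem injective_pt (n : ℕ) : Function.Injective (pt n : Y → ColumnSpace Y) :=
  fun _ _ h ↦ (pt.inj h).2

theorem preimage_pt_image_pt (m n : ℕ) (s : Set Y) :
    pt m ⁻¹' (pt n '' s) = if m = n then s else ∅ := by
  split_ifs with h
  · subst h; exact preimage_image_eq s (injective_pt _)
  · exact eq_empty_of_forall_notMem fun y ⟨_, _, hy⟩ ↦ h (pt.inj hy).1.symm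

variable [TopologicalSpace Y]

def IsOpenSet (O : Set (ColumnSpace Y)) : Prop :=
  (∀ n, IsOpen (pt n ⁻¹' O)) ∧
  (p ∈ O → ∀ᶠ n in atTop, range (pt n) ⊆ O) ∧
  (q ∈ O → ∀ᶠ n in atTop, ∃ J : Set Y, IsCompactT2Image J ∧ Jᶜ ⊆ pt n ⁻¹' O)

instance : TopologicalSpace (ColumnSpace Y) where
  IsOpen := IsOpenSet
  isOpen_univ := ⟨fun _ ↦ isOpen_univ, fun _ ↦ .of_forall fun _ ↦ subset_univ _,
    fun _ ↦ .of_forall fun _ ↦ ⟨∅, .empty, subset_univ _⟩⟩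
  isOpen_inter O O' h h' := by
    refine ⟨fun n ↦ (h.1 n).inter (h'.1 n), fun hp ↦ ?_, fun hq ↦ ?_⟩
    · filter_upwards [h.2.1 hp.1, h'.2.1 hp.2] with n hn hn' using subset_inter hn hn'
    · filter_upwards [h.2.2 hq.1, h'.2.2 hq.2] with n ⟨J, hJ, hJO⟩ ⟨J', hJ', hJO'⟩
      exact ⟨J ∪ J', hJ.union hJ', compl_union J J' ▸ inter_subset_inter hJO hJO'⟩
  isOpen_sUnion S hS := by
    refine ⟨fun n ↦ ?_, fun ⟨O, hO, hp⟩ ↦ ?_, fun ⟨O, hO, hq⟩ ↦ ?_⟩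
    · rw [preimage_sUnion]
      exact isOpen_biUnion fun O hO ↦ (hS O hO).1 n
    · filter_upwards [(hS O hO).2.1 hp] with n hn using hn.trans (subset_sUnion_of_mem hO)
    · filter_upwards [(hS O hO).2.2 hq] with n ⟨J, hJ, hJO⟩
      exact ⟨J, hJ, hJO.trans (preimage_mono (subset_sUnion_of_mem hO))⟩

theorem continuous_pt (n : ℕ) : Continuous (pt n : Y → ColumnSpace Y) :=
  continuous_def.2 fun _ hO ↦ hO.1 n

theorem isOpenMap_pt (n : ℕ) : IsOpenMap (pt n : Y → ColumnSpace Y) := by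
  refine fun V hV ↦ ⟨fun m ↦ ?_, fun ⟨_, _, h⟩ ↦ (nomatch h), fun ⟨_, _, h⟩ ↦ (nomatch h)⟩
  rw [preimage_pt_image_pt]
  split_ifs
  exacts [hV, isOpen_empty]

theorem isClosed_range_pt (n : ℕ) : IsClosed (range (pt n : Y → ColumnSpace Y)) := by
  have hlater : ∀ᶠ m in atTop, range (pt m) ⊆ (range (pt n : Y → ColumnSpace Y))ᶜ := by
    filter_upwards [eventually_gt_atTop n] with m hm
    rintro _ ⟨y, rfl⟩ ⟨y', h⟩
    exact hm.ne (pt.inj h).1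
  refine ⟨fun m ↦ ?_, fun _ ↦ hlater, fun _ ↦ ?_⟩
  · rw [← image_univ, preimage_compl, preimage_pt_image_pt]
    split_ifs
    exacts [isClosed_univ.isOpen_compl, isOpen_compl_iff.2 isClosed_empty]
  · filter_upwards [hlater] with m hm
    exact ⟨∅, .empty, fun y _ ↦ hm ⟨y, rfl⟩⟩

theorem isClosedEmbedding_pt (n : ℕ) : IsClosedEmbedding (pt n : Y → ColumnSpace Y) :=
  ⟨(IsOpenEmbedding.of_continuous_injective_isOpenMap (continuous_pt n) (injective_pt n)
    (isOpenMap_pt n)).isEmbedding, isClosed_range_pt n⟩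

theorem isCompact_compl_q [CompactSpace Y] : IsCompact ({q}ᶜ : Set (ColumnSpace Y)) := by
  let f : ℕ × Y → ColumnSpace Y := fun x ↦ pt x.1 x.2
  have hf : Continuous f := continuous_prod_of_discrete_left.2 continuous_pt
  have hfp : Tendsto f (cocompact (ℕ × Y)) (𝓝 p) := by
    refine (nhds_basis_opens p).tendsto_right_iff.2 fun O ⟨hpO, hO⟩ ↦ ?_
    obtain ⟨m, hm⟩ := eventually_atTop.1 (hO.2.1 hpO)
    filter_upwards [((finite_Iio m).isCompact.prod isCompact_univ).compl_mem_cocompact] with x hx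
    exact hm x.1 (by simpa using hx) ⟨x.2, rfl⟩
  have hrange : {q}ᶜ = insert p (range f) := by
    ext (_ | _ | _) <;> simp [f]
  exact hrange ▸ hfp.isCompact_insert_range_of_cocompact hf

theorem not_isClosed_compl_q (hY : ¬ IsCompactT2Image (univ : Set Y)) :
    ¬ IsClosed ({q}ᶜ : Set (ColumnSpace Y)) := by
  rw [isClosed_compl_iff]
  intro hq
  obtain ⟨n, J, hJ, hJq⟩ := (hq.2.2 rfl).exists
  have : Jᶜ = ∅ := subset_empty_iff.1 fun y hy ↦ nomatch hJq hy
  exact hY (compl_empty_iff.1 this ▸ hJ)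

theorem isOpen_insert_q_compl (hY : WeaklyHausdorff Y) {R : Set (ColumnSpace Y)}
    (hR : ∀ n, IsCompactT2Image (pt n ⁻¹' R)) : IsOpen (insert q (insert p R)ᶜ) := by
  have hpre (n : ℕ) : pt n ⁻¹' insert q (insert p R)ᶜ = (pt n ⁻¹' R)ᶜ := by
    ext; simp
  refine ⟨fun n ↦ ?_, fun h ↦ by simp at h, fun _ ↦ .of_forall fun n ↦ ⟨_, hR n, (hpre n).ge⟩⟩
  rw [hpre]
  exact ((hR n).isClosed hY).isOpen_compl

theorem weaklyHausdorff (hY : WeaklyHausdorff Y) : WeaklyHausdorff (ColumnSpace Y) := by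
  intro Z _ _ _ f hf
  have hslice (n : ℕ) : IsCompactT2Image (pt n ⁻¹' range f) :=
    .preimage (isClosedEmbedding_pt n) hf.isCompactT2Image_range
  rw [← isOpen_compl_iff]
  refine ⟨fun n ↦ ((hslice n).isClosed hY).isOpen_compl, fun hp ↦ ?_,
    fun _ ↦ .of_forall fun n ↦ ⟨_, hslice n, subset_rfl⟩⟩
  -- `U 0` meets `range f` only at `q`, so no column beyond the first `i` meets `range f`.
  let U (i : ℕ) : Set (ColumnSpace Y) :=
    insert q (insert p (range f))ᶜ ∪ ⋃ k ∈ Iio i, range (pt k)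
  obtain ⟨i, hi⟩ := (isCompact_range hf).elim_directed_cover U
    (fun i ↦ (isOpen_insert_q_compl hY hslice).union
      (isOpen_biUnion fun k _ ↦ (isOpenMap_pt k).isOpen_range))
    (fun
      | pt n y, _ => mem_iUnion.2 ⟨n + 1, .inr (mem_biUnion (lt_add_one n) ⟨y, rfl⟩)⟩
      | p, hx => absurd hx hp
      | q, _ => mem_iUnion.2 ⟨0, .inl (mem_insert _ _)⟩)
    (Monotone.directed_le fun i j hij ↦ union_subset_union_right _
      (biUnion_subset_biUnion_left (Iio_subset_Iio hij)))
  filter_upwards [eventually_ge_atTop i] with n hn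
  rintro _ ⟨y, rfl⟩ hy
  obtain hW | hcol := hi hy
  · simp [hy] at hW
  · obtain ⟨k, hk, z, hz⟩ := mem_iUnion₂.1 hcol
    exact not_le.2 ((pt.inj hz).1 ▸ hk) hn

end ColumnSpace

/-- There is a weakly Hausdorff space with a compact subset that is not closed. -/
theorem exists_weaklyHausdorff_not_kc :
    ∃ (X : Type) (_ : TopologicalSpace X), WeaklyHausdorff X ∧
      ∃ K : Set X, IsCompact K ∧ ¬ IsClosed K :=
  ⟨ColumnSpace (OnePoint ℚ), inferInstance,
    ColumnSpace.weaklyHausdorff OnePoint.kcSpace_s12.weaklyHausdorff, {ColumnSpace.q}ᶜ,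
    ColumnSpace.isCompact_compl_q, ColumnSpace.not_isClosed_compl_q
      (IsCompactT2Image.not_univ_of_kcSpace OnePoint.kcSpace_s12 OnePoint.not_t2Space_rat)⟩
end

section
/- There exists a topological space that is k₂-Hausdorff but not weakly Hausdorff; that is, a space X whose diagonal is k₂-closed in X × X, yet for some compact Hausdorff space K and continuous map f : K → X the image f[K] is not closed in X. -/
open Set Filter Topology

universe u

/-! On `Option ℝ`, where the neighbourhoods of `none` are `none` together with the dense open
subsets of `ℝ`, the interval `[0, 1]` is a compact Hausdorff subspace which is not closed,
because its complement in `ℝ` is not dense.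

The diagonal is nevertheless k₂-closed. The only difficulty is a point `k₀` of a compact Hausdorff
space at which two maps `g, h` take the values `none` and `some r` while `k₀` lies in the closure of
`{g = h}`. There are then agreement points `kₙ` whose common values `zₙ ≠ r` tend to `r`. The
countable closed set `C = {r, z₀, z₁, …}` has dense complement, so `some '' C` is closed and a
cluster point `x` of `(kₙ)` has `g x ∈ some '' C`; hence `g x = r`, which is impossible when the
`kₙ` are taken in a closed neighbourhood of `k₀` on which `g ≠ r`. -/

@[reducible]
def densePointTopology (Y : Type*) [TopologicalSpace Y] : TopologicalSpace (Option Y) where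
  IsOpen V := IsOpen (some ⁻¹' V) ∧ (none ∈ V → Dense (some ⁻¹' V))
  isOpen_univ := ⟨isOpen_univ, fun _ => dense_univ⟩
  isOpen_inter A B hA hB :=
    ⟨hA.1.inter hB.1, fun hn => (hA.2 hn.1).inter_of_isOpen_left (hB.2 hn.2) hA.1⟩
  isOpen_sUnion S hS := by
    refine ⟨by rw [preimage_sUnion]; exact isOpen_biUnion fun V hV => (hS V hV).1, ?_⟩
    rintro ⟨V, hVS, hnV⟩
    exact ((hS V hVS).2 hnV).mono (preimage_mono (subset_sUnion_of_mem hVS))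

namespace DensePointTopology

attribute [local instance] densePointTopology

variable {Y : Type*} [TopologicalSpace Y]

theorem isOpen_iff {V : Set (Option Y)} :
    IsOpen V ↔ IsOpen (some ⁻¹' V) ∧ (none ∈ V → Dense (some ⁻¹' V)) :=
  Iff.rfl

theorem isOpenEmbedding_some : IsOpenEmbedding (some : Y → Option Y) := by
  refine .of_continuous_injective_isOpenMap (continuous_def.mpr fun V hV => hV.1)
    (Option.some_injective Y) fun U hU => isOpen_iff.mpr ⟨?_, by simp⟩
  rwa [preimage_image_eq U (Option.some_injective Y)]

theorem isClosed_image_some_iff {C : Set Y} :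
    IsClosed (some '' C) ↔ IsClosed C ∧ Dense Cᶜ := by
  have hpre : some ⁻¹' (some '' C)ᶜ = Cᶜ := by
    rw [preimage_compl, preimage_image_eq C (Option.some_injective Y)]
  rw [← isOpen_compl_iff, isOpen_iff, hpre, isOpen_compl_iff]
  simp

theorem not_isClosed_image_some {C : Set Y} (hC : (interior C).Nonempty) :
    ¬ IsClosed (some '' C) := by
  rw [isClosed_image_some_iff, ← interior_eq_empty_iff_dense_compl]
  exact fun h => hC.ne_empty h.2

section Diagonal

variable [T2Space Y] [FirstCountableTopology Y] (hY : ∀ s : Set Y, s.Countable → Dense sᶜ)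
  {K : Type*} [TopologicalSpace K] [CompactSpace K] [RegularSpace K]
  {g h : K → Option Y}
include hY

theorem eq_none_of_mem_closure_setOf_eq (hg : Continuous g) (hh : Continuous h) {k₀ : K}
    (hk₀ : k₀ ∈ closure {k | g k = h k}) (hgk₀ : g k₀ = none) : h k₀ = none := by
  cases hr : h k₀ with
  | none => rfl
  | some r =>
  exfalso
  have hr_closed : IsClosed ({some r} : Set (Option Y)) := by
    rw [← image_singleton]
    exact isClosed_image_some_iff.mpr ⟨isClosed_singleton, hY _ (countable_singleton r)⟩
  obtain ⟨N, hN, hN_closed, hgN⟩ := exists_mem_nhds_isClosed_subset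
    ((hr_closed.isOpen_compl.preimage hg).mem_nhds (show k₀ ∈ g ⁻¹' {some r}ᶜ by simp [hgk₀]))
  set A : Set Y := {z | ∃ k ∈ N, g k = h k ∧ h k = some z}
  have hrA : r ∈ closure A := by
    refine mem_closure_iff_nhds.mpr fun t ht => ?_
    have hht : h ⁻¹' (some '' t) ∈ 𝓝 k₀ :=
      hh.continuousAt.preimage_mem_nhds (hr ▸ isOpenEmbedding_some.image_mem_nhds.mpr ht)
    obtain ⟨k, ⟨hkN, z, hzt, hkz⟩, hk⟩ := mem_closure_iff_nhds.mp hk₀ _ (inter_mem hN hht)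
    exact ⟨z, hzt, k, hkN, hk, hkz.symm⟩
  obtain ⟨z, hzA, hz⟩ := mem_closure_iff_seq_limit.mp hrA
  choose k hkN hgk hkz using hzA
  have hgkz : g ∘ k = some ∘ z := funext fun n => (hgk n).trans (hkz n)
  have hC : IsClosed (some '' insert r (range z) : Set (Option Y)) :=
    isClosed_image_some_iff.mpr ⟨hz.isCompact_insert_range.isClosed,
      hY _ ((countable_range z).insert r)⟩
  obtain ⟨x, hx⟩ : ∃ x, MapClusterPt x atTop k := exists_clusterPt_of_compactSpace _
  have hxN : x ∈ N := hN_closed.mem_of_mapClusterPt hx (.of_forall hkN)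
  have hgx : MapClusterPt (g x) atTop (some ∘ z) := hgkz ▸ hx.continuousAt_comp hg.continuousAt
  obtain ⟨y, -, hy⟩ : g x ∈ some '' insert r (range z) :=
    hC.mem_of_mapClusterPt hgx
      (.of_forall fun n => mem_image_of_mem _ (mem_insert_of_mem _ ⟨n, rfl⟩))
  rw [← hy] at hgx
  have hzy : ClusterPt y (map z atTop) := isOpenEmbedding_some.isInducing.mapClusterPt_iff.mp hgx
  have hyr : y = r := eq_of_nhds_neBot (hzy.mono hz).neBot
  exact hgN hxN (by simp [← hy, hyr])

theorem isClosed_setOf_eq (hg : Continuous g) (hh : Continuous h) :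
    IsClosed {k | g k = h k} := by
  refine closure_subset_iff_isClosed.mp fun k₀ hk₀ => ?_
  obtain hg₀ | ⟨a, ha⟩ := Option.eq_none_or_eq_some (g k₀)
  · exact hg₀.trans (eq_none_of_mem_closure_setOf_eq hY hg hh hk₀ hg₀).symm
  obtain hh₀ | ⟨b, hb⟩ := Option.eq_none_or_eq_some (h k₀)
  · have hk₀' : k₀ ∈ closure {k | h k = g k} := by simpa only [eq_comm] using hk₀
    exact (eq_none_of_mem_closure_setOf_eq hY hh hg hk₀' hh₀).trans hh₀.symm
  show g k₀ = h k₀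
  by_contra hab
  rw [ha, hb] at hab
  have hW : IsOpen (Prod.map some some '' {q : Y × Y | q.1 ≠ q.2}) :=
    (isOpenEmbedding_some.prodMap isOpenEmbedding_some).isOpenMap _
      isClosed_diagonal.isOpen_compl
  have hk₀W : (g k₀, h k₀) ∈ Prod.map some some '' {q : Y × Y | q.1 ≠ q.2} :=
    ⟨(a, b), fun hab' => hab (congrArg some hab'), by simp [ha, hb]⟩
  obtain ⟨k, ⟨q, hq, hqk⟩, hk⟩ :=
    mem_closure_iff_nhds.mp hk₀ _ ((hW.preimage (hg.prodMk hh)).mem_nhds hk₀W)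
  simp only [Prod.map, Prod.mk.injEq] at hqk
  exact hq (Option.some_injective Y (hqk.1.trans (hk.trans hqk.2.symm)))

end Diagonal

theorem k2Hausdorff [T2Space Y] [FirstCountableTopology Y]
    (hY : ∀ s : Set Y, s.Countable → Dense sᶜ) : K2Hausdorff (Option Y) :=
  fun _ _ _ _ _ hf => isClosed_setOf_eq hY (continuous_fst.comp hf) (continuous_snd.comp hf)

end DensePointTopology

/-- There is a k₂-Hausdorff space that is not weakly Hausdorff. -/
theorem exists_k2Hausdorff_not_weaklyHausdorff :
    ∃ (X : Type) (_ : TopologicalSpace X), K2Hausdorff X ∧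
      ∃ (K : Type) (_ : TopologicalSpace K) (_ : CompactSpace K) (_ : T2Space K)
        (f : K → X), Continuous f ∧ ¬ IsClosed (Set.range f) := by
  let := densePointTopology ℝ
  refine ⟨Option ℝ, inferInstance, DensePointTopology.k2Hausdorff fun s hs => hs.dense_compl ℝ,
    Icc (0 : ℝ) 1, inferInstance, isCompact_iff_compactSpace.mp isCompact_Icc, inferInstance,
    some ∘ Subtype.val,
    DensePointTopology.isOpenEmbedding_some.continuous.comp continuous_subtype_val, ?_⟩
  rw [range_comp, Subtype.range_coe]
  exact DensePointTopology.not_isClosed_image_some (by simp)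
end

section
/- There exists a topological space with unique sequential limits that is not k₂-Hausdorff; that is, a space X in which every convergent sequence has a unique limit, yet the diagonal Δ_X is not k₂-closed in X × X. -/
open Set Filter Topology

universe u

/-!
Double the point `ω₁` of the compact ordinal space `[0, ω₁]`: the result `X` is the union of
two copies of `[0, ω₁]` glued along `[0, ω₁)`. Pairing the two embeddings gives a continuous map
from the compact Hausdorff space `[0, ω₁]` to `X × X`, and the preimage of the diagonal under it
is `[0, ω₁)`, which is not closed. On the other hand a sequence converging to
both copies of `ω₁` would eventually avoid them, and its projection to `[0, ω₁]` would then be a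
sequence of countable ordinals converging to `ω₁`; but such a sequence is bounded below `ω₁`.
-/

open Cardinal Ordinal

theorem Filter.Tendsto.mem_seqClosure {X : Type*} [TopologicalSpace X] {s : Set X} {x : ℕ → X}
    {a : X} (hx : ∀ᶠ n in atTop, x n ∈ s) (hlim : Tendsto x atTop (𝓝 a)) : a ∈ seqClosure s := by
  obtain ⟨N, hN⟩ := eventually_atTop.1 hx
  exact ⟨fun n ↦ x (n + N), fun n ↦ hN _ (Nat.le_add_left N n),
    (tendsto_add_atTop_iff_nat N).2 hlim⟩

theorem Order.noMaxOrder_of_aleph0_lt_cof {W : Type*} [LinearOrder W] [Nonempty W]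
    (hW : ℵ₀ < Order.cof W) : NoMaxOrder W :=
  have := Order.one_lt_cof_iff.1 (one_lt_aleph0.trans hW)
  NoTopOrder.to_noMaxOrder W

theorem Order.bddAbove_range_of_aleph0_lt_cof {W : Type*} [LinearOrder W]
    (hW : ℵ₀ < Order.cof W) (v : ℕ → W) : BddAbove (range v) := by
  have : Nonempty W := ⟨v 0⟩
  have := Order.noMaxOrder_of_aleph0_lt_cof hW
  rw [← not_isCofinal_iff_bddAbove]
  intro hv
  exact ((Order.cof_le hv).trans (mk_le_aleph0_iff.2 (countable_range v).to_subtype)).not_gt hW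

namespace WithTop

variable {W : Type*} [LinearOrder W] [TopologicalSpace (WithTop W)] [OrderTopology (WithTop W)]

theorem not_isOpen_singleton_top [Nonempty W] [NoMaxOrder W] : ¬IsOpen {(⊤ : WithTop W)} := by
  intro h
  obtain ⟨w⟩ := ‹Nonempty W›
  obtain ⟨l, hl, hsub⟩ :=
    exists_Ioc_subset_of_mem_nhds (h.mem_nhds rfl) ⟨(w : WithTop W), coe_lt_top w⟩
  lift l to W using hl.ne
  obtain ⟨b, hb⟩ := exists_gt l
  exact coe_ne_top (hsub ⟨coe_lt_coe.2 hb, le_top⟩)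

theorem top_notMem_seqClosure_compl (hW : ∀ v : ℕ → W, BddAbove (range v)) :
    (⊤ : WithTop W) ∉ seqClosure {⊤}ᶜ := by
  rintro ⟨x, hx, hlim⟩
  lift x to ℕ → W using hx
  obtain ⟨b, hb⟩ := hW x
  obtain ⟨n, hn⟩ := (hlim.eventually (lt_mem_nhds (coe_lt_top b))).exists
  exact (coe_lt_coe.1 hn).not_ge (hb ⟨n, rfl⟩)

end WithTop

theorem exists_compactSpace_t2Space_not_isOpen_singleton_notMem_seqClosure :
    ∃ (K : Type) (_ : TopologicalSpace K) (_ : CompactSpace K) (_ : T2Space K) (t : K),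
      ¬IsOpen {t} ∧ t ∉ seqClosure {t}ᶜ := by
  let W := (ω₁ : Ordinal.{0}).ToType
  have hcof : ℵ₀ < Order.cof W := by
    rw [Ordinal.cof_toType, cof_omega_one]
    exact aleph0_lt_aleph_one
  have : Nonempty W := Ordinal.nonempty_toType_iff.2 (Ordinal.omega_pos 1).ne'
  have := Order.noMaxOrder_of_aleph0_lt_cof hcof
  let _ : OrderBot W := WellFoundedLT.toOrderBot W
  -- makes `WithTop W` a complete linear order, hence compact in its order topology
  let _ : ConditionallyCompleteLinearOrderBot W :=
    WellFoundedLT.conditionallyCompleteLinearOrderBot W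
  let _ : TopologicalSpace (WithTop W) := Preorder.topology _
  have : OrderTopology (WithTop W) := ⟨rfl⟩
  exact ⟨WithTop W, inferInstance, inferInstance, inferInstance, ⊤,
    WithTop.not_isOpen_singleton_top,
    WithTop.top_notMem_seqClosure_compl (Order.bddAbove_range_of_aleph0_lt_cof hcof)⟩

/-- `K` with the point `t` doubled: `some k` is `k`, and `none` is a twin of `t`. -/
def DoubledPoint (K : Type u) (_t : K) : Type u := Option K

namespace DoubledPoint

variable {K : Type u} {t : K}

variable (t) in
def inl : K → DoubledPoint K t := some

open Classical in
variable (t) in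
noncomputable def inr : K → DoubledPoint K t := fun k ↦ (if k = t then none else some k : Option K)

def proj : DoubledPoint K t → K := fun x ↦ Option.getD x t

theorem proj_inr (k : K) : proj (inr t k) = k := by
  unfold inr; split_ifs with h <;> simp [proj, h]

theorem inl_injective : Function.Injective (inl t) := Option.some_injective K

theorem inr_injective : Function.Injective (inr t) :=
  Function.LeftInverse.injective proj_inr

theorem inl_eq_inr_iff {k : K} : inl t k = inr t k ↔ k ≠ t := by
  by_cases h : k = t
  · simp [inl, inr, h]
  · rw [inr, if_neg h]
    exact iff_of_true rfl h

theorem eq_inl_inr_of_proj_eq {x y : DoubledPoint K t} (h : proj x = proj y) (hne : x ≠ y) :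
    x = inl t t ∧ y = inr t t ∨ x = inr t t ∧ y = inl t t := by
  have inr_self : inr t t = none := if_pos rfl
  cases x with
  | none => cases y with
    | none => exact absurd rfl hne
    | some b => exact Or.inr ⟨inr_self.symm, congrArg some h.symm⟩
  | some a => cases y with
    | none => exact Or.inl ⟨congrArg some h, inr_self.symm⟩
    | some b => exact absurd (congrArg some h) hne

variable [TopologicalSpace K]

noncomputable instance : TopologicalSpace (DoubledPoint K t) :=
  .coinduced (inl t) ‹_› ⊔ .coinduced (inr t) ‹_›

theorem continuous_inl : Continuous (inl t) := continuous_iff_coinduced_le.2 le_sup_left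

theorem continuous_inr : Continuous (inr t) := continuous_iff_coinduced_le.2 le_sup_right

theorem continuous_proj : Continuous (proj : DoubledPoint K t → K) := by
  refine continuous_sup_dom.2 ⟨continuous_coinduced_dom.2 ?_, continuous_coinduced_dom.2 ?_⟩
  · exact continuous_id
  · exact continuous_id.congr fun k ↦ (proj_inr k).symm

theorem isClosed_iff {s : Set (DoubledPoint K t)} :
    IsClosed s ↔ IsClosed (inl t ⁻¹' s) ∧ IsClosed (inr t ⁻¹' s) := by
  simp only [← isOpen_compl_iff]
  exact isOpen_sup

instance [T1Space K] : T1Space (DoubledPoint K t) :=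
  ⟨fun _ ↦ isClosed_iff.2 ⟨(subsingleton_singleton.preimage inl_injective).isClosed,
    (subsingleton_singleton.preimage inr_injective).isClosed⟩⟩

theorem not_tendsto_inl_and_inr [T1Space K] (ht : t ∉ seqClosure {t}ᶜ) (u : ℕ → DoubledPoint K t)
    (hl : Tendsto u atTop (𝓝 (inl t t))) (hr : Tendsto u atTop (𝓝 (inr t t))) : False := by
  have hne : inl t t ≠ inr t t := fun h ↦ inl_eq_inr_iff.1 h rfl
  have hproj : Tendsto (proj ∘ u) atTop (𝓝 t) := (continuous_proj.tendsto _).comp hl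
  refine ht (hproj.mem_seqClosure ?_)
  filter_upwards [hr.eventually_ne hne.symm, hl.eventually_ne hne] with n hnl hnr hn
  rcases eq_inl_inr_of_proj_eq (y := inl t t) hn hnl with ⟨h, -⟩ | ⟨h, -⟩
  exacts [hnl h, hnr h]

theorem uniqueSequentialLimits [T2Space K] (ht : t ∉ seqClosure {t}ᶜ) :
    UniqueSequentialLimits (DoubledPoint K t) := by
  intro u l₀ l₁ h₀ h₁
  have hproj : proj l₀ = proj l₁ :=
    tendsto_nhds_unique ((continuous_proj.tendsto _).comp h₀) ((continuous_proj.tendsto _).comp h₁)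
  by_contra hne
  rcases eq_inl_inr_of_proj_eq hproj hne with ⟨rfl, rfl⟩ | ⟨rfl, rfl⟩
  · exact not_tendsto_inl_and_inr ht u h₀ h₁
  · exact not_tendsto_inl_and_inr ht u h₁ h₀

theorem not_k2Hausdorff [CompactSpace K] [T2Space K] (ht : ¬IsOpen {t}) :
    ¬K2Hausdorff (DoubledPoint K t) := by
  intro h
  have hclosed := h K (fun k ↦ (inl t k, inr t k)) (continuous_inl.prodMk continuous_inr)
  have hpre : (fun k ↦ (inl t k, inr t k)) ⁻¹' {p | p.1 = p.2} = {t}ᶜ := by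
    ext k; exact inl_eq_inr_iff
  rw [hpre, isClosed_compl_iff] at hclosed
  exact ht hclosed

end DoubledPoint

/-- There is a space with unique sequential limits that is not k₂-Hausdorff. -/
theorem exists_uniqueSequentialLimits_not_k2Hausdorff :
    ∃ (X : Type) (_ : TopologicalSpace X), UniqueSequentialLimits X ∧ ¬ K2Hausdorff X := by
  obtain ⟨K, _, _, _, t, hopen, hseq⟩ :=
    exists_compactSpace_t2Space_not_isOpen_singleton_notMem_seqClosure
  exact ⟨DoubledPoint K t, inferInstance, DoubledPoint.uniqueSequentialLimits hseq,
    DoubledPoint.not_k2Hausdorff hopen⟩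
end
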